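/- For any prime p ≥ 3 and any positive integers r, s, t, the triple sum ∑_{m1=0}^{rp-1} ∑_{m2=0}^{sp-1} ∑_{m3=0}^{tp-1} (m1+m2+m3)! / (m1! · m2! · m3!) is congruent modulo p to κ_{rst} = ∑_{m1=0}^{r-1} ∑_{m2=0}^{s-1} ∑_{m3=0}^{t-1} (m1+m2+m3)! / (m1! · m2! · m3!). -/

import Mathlib

/-!
By Lucas's theorem, writing `m = a * p + b` with digits `b < p` gives
`multinomial (a * p + b) ≡ multinomial a * multinomial b (mod p)`; when the digits `b` carry,
both sides vanish. The sum over the box `[0, r p) × [0, s p) × [0, t p)` therefore factors as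
`κ_rst` times the sum over the digit box `[0, p)³`, and the latter is `≡ 1`: summing over `b₃` by
the hockey-stick identity and Lucas leaves only the terms with `b₁ + b₂ = p - 1`, which contribute
`∑ C(p - 1, b₁) = 2 ^ (p - 1) ≡ 1` for odd `p`.
-/

open Finset

theorem Nat.Prime.dvd_multinomial {α : Type*} {p : ℕ} (hp : p.Prime) {s : Finset α}
    {f : α → ℕ} (hf : ∀ i ∈ s, f i < p) (hsum : p ≤ ∑ i ∈ s, f i) :
    p ∣ Nat.multinomial s f := by
  have hdvd : p ∣ (∏ i ∈ s, (f i).factorial) * Nat.multinomial s f :=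
    Nat.multinomial_spec s f ▸ Nat.dvd_factorial hp.pos hsum
  refine Nat.Coprime.dvd_of_dvd_mul_left (Nat.Coprime.prod_right fun i hi => ?_) hdvd
  exact (Nat.Prime.coprime_iff_not_dvd hp).2 fun h => (hf i hi).not_ge (hp.dvd_factorial.1 h)

theorem Nat.multinomial_univ_three_eq_choose_mul_choose (x y z : ℕ) :
    Nat.multinomial univ ![x, y, z] = (z + (x + y)).choose (x + y) * (x + y).choose x := by
  rw [show (univ : Finset (Fin 3)) = insert 2 (insert 1 {0}) by decide,
    Nat.multinomial_insert (by decide), Nat.multinomial_insert (by decide),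
    Nat.multinomial_singleton]
  simp only [Matrix.cons_val, sum_insert (by decide : (1 : Fin 3) ∉ ({0} : Finset (Fin 3))),
    sum_singleton, mul_one]
  rw [Nat.choose_symm_add, add_comm y x, Nat.choose_symm_add]

theorem Finset.sum_range_mul_eq_sum_sum {M : Type*} [AddCommMonoid M] (f : ℕ → M) (n q : ℕ) :
    ∑ m ∈ range (n * q), f m = ∑ a ∈ range n, ∑ b ∈ range q, f (a * q + b) := by
  induction n with
  | zero => simp
  | succ n ih => rw [add_one_mul, sum_range_add, ih, sum_range_succ]

theorem Finset.sum_range_mul_three_eq_mul {R : Type*} [CommSemiring R]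
    {F G H : ℕ → ℕ → ℕ → R} (q r s t : ℕ)
    (hF : ∀ a1 a2 a3 b1 b2 b3, b1 < q → b2 < q → b3 < q →
      F (a1 * q + b1) (a2 * q + b2) (a3 * q + b3) = G a1 a2 a3 * H b1 b2 b3) :
    ∑ m1 ∈ range (r * q), ∑ m2 ∈ range (s * q), ∑ m3 ∈ range (t * q), F m1 m2 m3 =
      (∑ a1 ∈ range r, ∑ a2 ∈ range s, ∑ a3 ∈ range t, G a1 a2 a3) *
        ∑ b1 ∈ range q, ∑ b2 ∈ range q, ∑ b3 ∈ range q, H b1 b2 b3 := by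
  simp only [sum_range_mul_eq_sum_sum, sum_mul_sum]
  refine sum_congr rfl fun a1 _ => sum_congr rfl fun b1 hb1 => ?_
  refine sum_congr rfl fun a2 _ => sum_congr rfl fun b2 hb2 => ?_
  refine sum_congr rfl fun a3 _ => sum_congr rfl fun b3 hb3 => ?_
  exact hF a1 a2 a3 b1 b2 b3 (mem_range.1 hb1) (mem_range.1 hb2) (mem_range.1 hb3)

section Lucas

variable {p : ℕ} [Fact p.Prime]

theorem cast_choose_eq_zero_of_mod_lt {n k : ℕ} (h : n % p < k % p) :
    (n.choose k : ZMod p) = 0 := by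
  rw [(ZMod.natCast_eq_natCast_iff _ _ _).2 Choose.choose_modEq_choose_mod_mul_choose_div_nat,
    Nat.choose_eq_zero_of_lt h, zero_mul, Nat.cast_zero]

theorem cast_choose_mul_add_mul_add {a b c d : ℕ} (hb : b < p) (hd : d < p) :
    ((a * p + b).choose (c * p + d) : ZMod p) = a.choose c * b.choose d := by
  have hp := (Fact.out : p.Prime).pos
  rw [(ZMod.natCast_eq_natCast_iff _ _ _).2 Choose.choose_modEq_choose_mod_mul_choose_div_nat,
    Nat.mul_add_mod_of_lt hb, Nat.mul_add_mod_of_lt hd, mul_comm a, mul_comm c,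
    Nat.mul_add_div hp, Nat.mul_add_div hp, Nat.div_eq_of_lt hb, Nat.div_eq_of_lt hd,
    add_zero, add_zero, Nat.cast_mul, mul_comm]

theorem cast_multinomial_mul_add {α : Type*} [DecidableEq α] {s : Finset α} {a b : α → ℕ}
    (hb : ∀ i ∈ s, b i < p) :
    (Nat.multinomial s (fun i => a i * p + b i) : ZMod p) =
      Nat.multinomial s a * Nat.multinomial s b := by
  induction s using Finset.induction_on with
  | empty => simp
  | insert i s hi ih =>
    have hbi := hb i (mem_insert_self i s)
    specialize ih fun j hj => hb j (mem_insert_of_mem hj)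
    rw [Nat.multinomial_insert hi, Nat.multinomial_insert hi, Nat.multinomial_insert hi,
      sum_add_distrib, ← sum_mul]
    push_cast
    rw [ih]
    set A := ∑ j ∈ s, a j
    set B := ∑ j ∈ s, b j
    by_cases hB : p ≤ B
    · rw [(ZMod.natCast_eq_zero_iff _ _).2 ((Fact.out : p.Prime).dvd_multinomial
        (fun j hj => hb j (mem_insert_of_mem hj)) hB)]
      ring
    by_cases hcarry : p ≤ b i + B
    · -- a carry out of the lowest digit makes both sides vanish
      obtain ⟨c, hc⟩ : ∃ c, b i + B = p + c := ⟨_, (Nat.add_sub_of_le hcarry).symm⟩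
      have hn : a i * p + b i + (A * p + B) = (a i + A + 1) * p + c := by linarith
      have hzero : ((b i + B).choose (b i) : ZMod p) = 0 := by
        apply cast_choose_eq_zero_of_mod_lt
        rw [hc, Nat.add_mod_left, Nat.mod_eq_of_lt (by omega), Nat.mod_eq_of_lt hbi]
        omega
      rw [hn, hzero, cast_choose_eq_zero_of_mod_lt]
      · ring
      · rw [Nat.mul_add_mod_of_lt (by omega), Nat.mul_add_mod_of_lt hbi]
        omega
    · have hn : a i * p + b i + (A * p + B) = (a i + A) * p + (b i + B) := by ring
      rw [hn, cast_choose_mul_add_mul_add (by omega) hbi]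
      ring

theorem cast_sum_range_add_choose (m : ℕ) :
    ∑ j ∈ range p, ((j + m).choose m : ZMod p) = if m % p = p - 1 then 1 else 0 := by
  obtain ⟨n, rfl⟩ : ∃ n, p = n + 1 :=
    ⟨p - 1, (Nat.sub_add_cancel (Fact.out : p.Prime).one_le).symm⟩
  -- the hockey stick gives `C(m + p, p - 1)`, which Lucas reduces to `C(m % p, p - 1)`
  rw [← Nat.cast_sum, Nat.sum_range_add_choose, show n + m + 1 = m + 1 + n by ring,
    Nat.choose_symm_add,
    (ZMod.natCast_eq_natCast_iff _ _ _).2 Choose.choose_modEq_choose_mod_mul_choose_div_nat,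
    add_assoc, add_comm 1 n, Nat.add_mod_right, Nat.mod_eq_of_lt n.lt_add_one,
    Nat.div_eq_of_lt n.lt_add_one, Nat.choose_zero_right, mul_one, Nat.add_sub_cancel]
  split_ifs with h
  · rw [h, Nat.choose_self, Nat.cast_one]
  · rw [Nat.choose_eq_zero_of_lt, Nat.cast_zero]
    have := Nat.mod_lt m n.add_one_pos
    omega

theorem cast_sum_range_multinomial_univ_three_eq_one (hp2 : p ≠ 2) :
    ∑ b1 ∈ range p, ∑ b2 ∈ range p, ∑ b3 ∈ range p,
      (Nat.multinomial univ ![b1, b2, b3] : ZMod p) = 1 := by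
  have hp := (Fact.out : p.Prime).pos
  have hinner : ∀ b1 ∈ range p, ∀ b2 ∈ range p,
      ∑ b3 ∈ range p, (Nat.multinomial univ ![b1, b2, b3] : ZMod p) =
        if b2 = p - 1 - b1 then ((p - 1).choose b1 : ZMod p) else 0 := by
    intro b1 hb1 b2 hb2
    rw [mem_range] at hb1 hb2
    have hdigit : (b1 + b2) % p = p - 1 ↔ b2 = p - 1 - b1 := by
      rcases lt_or_ge (b1 + b2) p with h | h
      · rw [Nat.mod_eq_of_lt h]
        omega
      · rw [Nat.mod_eq_sub_mod h, Nat.mod_eq_of_lt (by omega)]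
        omega
    simp only [Nat.multinomial_univ_three_eq_choose_mul_choose, Nat.cast_mul, ← sum_mul,
      cast_sum_range_add_choose, hdigit]
    split_ifs with h
    · rw [one_mul, show b1 + b2 = p - 1 by omega]
    · rw [zero_mul]
  rw [sum_congr rfl fun b1 hb1 => sum_congr rfl (hinner b1 hb1)]
  simp only [sum_ite_eq', mem_range, show ∀ b1, p - 1 - b1 < p from fun _ => by omega, if_true]
  have hrow : ∑ b1 ∈ range p, (p - 1).choose b1 = 2 ^ (p - 1) := by
    simpa [Nat.sub_add_cancel hp] using Nat.sum_range_choose (p - 1)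
  rw [← Nat.cast_sum, hrow, Nat.cast_pow, Nat.cast_ofNat]
  exact ZMod.pow_card_sub_one_eq_one (Ring.two_ne_zero (by rwa [ZMod.ringChar_zmod_n]))

end Lucas

theorem triple_sum_multinomial_rp_sp_tp_mod_p_general (p : ℕ) (hp : p.Prime) (hp3 : 3 ≤ p)
    (r s t : ℕ) :
    (∑ m1 ∈ Finset.range (r * p), ∑ m2 ∈ Finset.range (s * p), ∑ m3 ∈ Finset.range (t * p),
      (Nat.multinomial Finset.univ ![m1, m2, m3] : ZMod p)) =
    ∑ m1 ∈ Finset.range r, ∑ m2 ∈ Finset.range s, ∑ m3 ∈ Finset.range t,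
      (Nat.multinomial Finset.univ ![m1, m2, m3] : ZMod p) := by
  have := Fact.mk hp
  rw [sum_range_mul_three_eq_mul p r s t fun a1 a2 a3 b1 b2 b3 h1 h2 h3 => ?_,
    cast_sum_range_multinomial_univ_three_eq_one (by omega), mul_one]
  have hdigits : ![a1 * p + b1, a2 * p + b2, a3 * p + b3] =
      fun i => ![a1, a2, a3] i * p + ![b1, b2, b3] i := by
    ext i
    fin_cases i <;> rfl
  rw [hdigits]
  exact cast_multinomial_mul_add fun i _ => by fin_cases i <;> assumption

theorem triple_sum_multinomial_rp_sp_tp_mod_p (p : ℕ) (hp : p.Prime) (hp3 : 3 ≤ p)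
    (r s t : ℕ) (hr : 0 < r) (hs : 0 < s) (ht : 0 < t) :
    (∑ m1 ∈ Finset.range (r * p), ∑ m2 ∈ Finset.range (s * p), ∑ m3 ∈ Finset.range (t * p),
      (Nat.multinomial Finset.univ ![m1, m2, m3] : ZMod p)) =
    ∑ m1 ∈ Finset.range r, ∑ m2 ∈ Finset.range s, ∑ m3 ∈ Finset.range t,
      (Nat.multinomial Finset.univ ![m1, m2, m3] : ZMod p) :=
  triple_sum_multinomial_rp_sp_tp_mod_p_general p hp hp3 r s t
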